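/- arXiv:2105.02361 — 2 statements merged into one kernel-verified Lean document; each statement's English description precedes it below -/
import Mathlib

section
/- The real sequence k ↦ c_o(R_{2k+1}) / c_e(R_{2k+1}) (k ≥ 1) tends to infinity as k → ∞. -/
open SimpleGraph Filter

/-- A subgraph is a cycle: nonempty vertex set, connected, and every vertex of the
subgraph has degree exactly 2 in the subgraph. -/
def SimpleGraph.Subgraph.IsCycleSub {V : Type*} {G : SimpleGraph V} (H : G.Subgraph) : Prop :=
  H.verts.Nonempty ∧ H.coe.Connected ∧ ∀ v ∈ H.verts, (H.neighborSet v).ncard = 2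

/-- The number of odd cycles of `G`. -/
noncomputable def cOdd {V : Type*} (G : SimpleGraph V) : ℕ :=
  {H : G.Subgraph | H.IsCycleSub ∧ Odd H.verts.ncard}.ncard

/-- The number of even cycles of `G`. -/
noncomputable def cEven {V : Type*} (G : SimpleGraph V) : ℕ :=
  {H : G.Subgraph | H.IsCycleSub ∧ Even H.verts.ncard}.ncard

/-- The number of odd cycles of `G` passing through the edge `xy`. -/
noncomputable def cOddE {V : Type*} (G : SimpleGraph V) (x y : V) : ℕ :=
  {H : G.Subgraph | H.IsCycleSub ∧ Odd H.verts.ncard ∧ H.Adj x y}.ncard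

/-- The number of even cycles of `G` passing through the edge `xy`. -/
noncomputable def cEvenE {V : Type*} (G : SimpleGraph V) (x y : V) : ℕ :=
  {H : G.Subgraph | H.IsCycleSub ∧ Even H.verts.ncard ∧ H.Adj x y}.ncard

/-- The graph `R_k`: a `k`-cycle `v_0 … v_(k-1)` where each edge `v_i v_(i+1)` lies on an
attached 4-cycle `v_i a_i b_i v_(i+1)`.  Vertex `(i, 0)` is `v_i`, `(i, 1)` is `a_i`,
`(i, 2)` is `b_i`. -/
def RGraph (k : ℕ) : SimpleGraph (ZMod k × Fin 3) :=
  SimpleGraph.fromRel (fun p q =>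
    (p.2 = 0 ∧ q.2 = 0 ∧ q.1 = p.1 + 1) ∨
    (p.2 = 0 ∧ q.2 = 1 ∧ q.1 = p.1) ∨
    (p.2 = 1 ∧ q.2 = 2 ∧ q.1 = p.1) ∨
    (p.2 = 2 ∧ q.2 = 0 ∧ q.1 = p.1 + 1))

/-! Every cycle of `R_k` is either one of the `k` squares `v_j a_j b_j v_(j+1)` or a "ring" that
visits every `v_j` and, for each `j`, goes from `v_j` to `v_(j+1)` either directly or through the
detour `a_j b_j`. The key point is that a cycle contains no other cycle: a cycle using both the
edge `v_j v_(j+1)` and the vertex `a_j` contains the `j`-th square, and any other cycle is contained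
in the ring whose detours are at the `a_j` it visits. A ring with `d` detours has `k + 2d`
vertices, so for odd `k` the `2^k` rings are odd and the even cycles are among the `k` squares;
hence `c_o / c_e ≥ 2^k / k`. -/

namespace SimpleGraph

variable {V : Type*} {G : SimpleGraph V}

namespace Subgraph

theorem IsCycleSub.neighborSet_eq_of_le {H H' : G.Subgraph} (hH : H.IsCycleSub)
    (hH' : H'.IsCycleSub) (hle : H ≤ H') {v : V} (hv : v ∈ H.verts) :
    H.neighborSet v = H'.neighborSet v :=
  Set.eq_of_subset_of_ncard_le (neighborSet_subset_of_subgraph hle v)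
    (by rw [hH.2.2 v hv, hH'.2.2 v (hle.1 hv)])
    (Set.finite_of_ncard_ne_zero (by rw [hH'.2.2 v (hle.1 hv)]; simp))

theorem IsCycleSub.eq_of_le {H H' : G.Subgraph} (hH : H.IsCycleSub) (hH' : H'.IsCycleSub)
    (hle : H ≤ H') : H = H' := by
  have hnbr {v : V} (hv : v ∈ H.verts) {w : V} (hvw : H'.Adj v w) : H.Adj v w := by
    rw [← mem_neighborSet, hH.neighborSet_eq_of_le hH' hle hv]
    exact hvw
  obtain ⟨v₀, hv₀⟩ := hH.1
  have hverts : H'.verts ⊆ H.verts := by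
    intro w hw
    obtain ⟨p⟩ := hH'.2.1 ⟨v₀, hle.1 hv₀⟩ ⟨w, hw⟩
    suffices ∀ {x y : H'.verts}, H'.coe.Walk x y → x.1 ∈ H.verts → y.1 ∈ H.verts from this p hv₀
    intro x y q
    induction q with
    | nil => exact id
    | cons hxy _ ih => exact fun hx => ih (hnbr hx hxy).snd_mem
  exact le_antisymm hle ⟨hverts, fun v w hvw => hnbr (hverts hvw.fst_mem) hvw⟩

theorem IsCycleSub.adj_of_neighborSet_subset {H : G.Subgraph} (hH : H.IsCycleSub) {v x y : V}
    (hv : v ∈ H.verts) (hG : G.neighborSet v ⊆ {x, y}) : H.Adj v x ∧ H.Adj v y := by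
  have hsub := (H.neighborSet_subset v).trans hG
  have : H.neighborSet v = {x, y} :=
    Set.eq_of_subset_of_ncard_le hsub
      (by rw [hH.2.2 v hv]; exact (Set.ncard_insert_le x {y}).trans (by simp)) (Set.toFinite _)
  simp only [← mem_neighborSet, this, Set.mem_insert_iff, Set.mem_singleton_iff, or_true,
    true_or, and_self]

def ofSucc (s : Set V) (σ : V → V) : G.Subgraph where
  verts := s
  Adj v w := G.Adj v w ∧ v ∈ s ∧ w ∈ s ∧ (w = σ v ∨ v = σ w)
  adj_sub h := h.1
  edge_vert h := h.2.1
  symm := ⟨fun _ _ ⟨h, hv, hw, h'⟩ => ⟨h.symm, hw, hv, h'.symm⟩⟩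

variable {s : Set V} {σ : V → V}

theorem neighborSet_ofSucc (hσ : ∀ v ∈ s, G.Adj v (σ v)) (hbij : Set.BijOn σ s s) {v w : V}
    (hv : v ∈ s) (hw : w ∈ s) (hwv : σ w = v) :
    (ofSucc s σ : G.Subgraph).neighborSet v = {σ v, w} := by
  ext u
  simp only [mem_neighborSet, ofSucc, Set.mem_insert_iff, Set.mem_singleton_iff]
  constructor
  · rintro ⟨-, -, hu, rfl | h⟩
    · exact Or.inl rfl
    · exact Or.inr (hbij.injOn hu hw (h.symm.trans hwv.symm))
  · rintro (rfl | rfl)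
    · exact ⟨hσ v hv, hv, hbij.mapsTo hv, Or.inl rfl⟩
    · exact ⟨hwv ▸ (hσ u hw).symm, hv, hw, Or.inr hwv.symm⟩

theorem isCycleSub_ofSucc (hσ : ∀ v ∈ s, G.Adj v (σ v)) (hbij : Set.BijOn σ s s)
    (hσσ : ∀ v ∈ s, σ (σ v) ≠ v) {v₀ : V} (hv₀ : v₀ ∈ s) (horbit : ∀ v ∈ s, ∃ n, σ^[n] v₀ = v) :
    (ofSucc s σ : G.Subgraph).IsCycleSub := by
  refine ⟨⟨v₀, hv₀⟩, ?_, fun v hv => ?_⟩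
  · rw [connected_iff_exists_forall_reachable]
    refine ⟨⟨v₀, hv₀⟩, fun ⟨v, hv⟩ => ?_⟩
    obtain ⟨n, rfl⟩ := horbit v hv
    induction n with
    | zero => rfl
    | succ n ih =>
      have hn := hbij.mapsTo.iterate n hv₀
      refine (ih hn).trans (Adj.reachable (?_ : (ofSucc s σ : G.Subgraph).Adj _ _))
      have hsucc := Function.iterate_succ_apply' σ n v₀
      exact ⟨by simpa only [hsucc] using hσ _ hn, hn, hv, Or.inl hsucc⟩
  · obtain ⟨w, hw, hwv⟩ := hbij.surjOn hv
    rw [neighborSet_ofSucc hσ hbij hv hw hwv]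
    refine Set.ncard_pair fun h => hσσ v hv ?_
    rw [h, hwv]

end Subgraph

theorem Walk.IsCycle.isCycleSub_toSubgraph {u : V} {p : G.Walk u u} (hp : p.IsCycle) :
    p.toSubgraph.IsCycleSub :=
  ⟨⟨u, p.start_mem_verts_toSubgraph⟩, p.toSubgraph_connected,
    fun _ hv => hp.ncard_neighborSet_toSubgraph_eq_two (p.mem_verts_toSubgraph.1 hv)⟩

end SimpleGraph

namespace RGraph

variable {k : ℕ}

theorem adj_v_v (hk : 1 < k) (j : ZMod k) : (RGraph k).Adj (j, 0) (j + 1, 0) := by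
  have : Fact (1 < k) := ⟨hk⟩
  simp [RGraph]

theorem adj_v_a (j : ZMod k) : (RGraph k).Adj (j, 0) (j, 1) := by
  simp [RGraph]

theorem adj_a_b (j : ZMod k) : (RGraph k).Adj (j, 1) (j, 2) := by
  simp [RGraph]

theorem adj_b_v (j : ZMod k) : (RGraph k).Adj (j, 2) (j + 1, 0) := by
  simp [RGraph]

theorem neighborSet_a_subset (j : ZMod k) :
    (RGraph k).neighborSet (j, 1) ⊆ {(j, 0), (j, 2)} := by
  rintro ⟨i, t⟩ h
  fin_cases t <;> simp_all [RGraph]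

theorem neighborSet_b_subset (j : ZMod k) :
    (RGraph k).neighborSet (j, 2) ⊆ {(j, 1), (j + 1, 0)} := by
  rintro ⟨i, t⟩ h
  fin_cases t <;> simp_all [RGraph]

def squareWalk (hk : 1 < k) (j : ZMod k) : (RGraph k).Walk (j, 0) (j, 0) :=
  .cons (adj_v_a j) (.cons (adj_a_b j) (.cons (adj_b_v j) (.cons (adj_v_v hk j).symm .nil)))

def square (hk : 1 < k) (j : ZMod k) : (RGraph k).Subgraph := (squareWalk hk j).toSubgraph

theorem isCycleSub_square (hk : 1 < k) (j : ZMod k) : (square hk j).IsCycleSub := by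
  have : Fact (1 < k) := ⟨hk⟩
  exact Walk.IsCycle.isCycleSub_toSubgraph (by simp [squareWalk, Walk.cons_isCycle_iff])

theorem ncard_verts_square (hk : 1 < k) (j : ZMod k) : (square hk j).verts.ncard = 4 := by
  have : Fact (1 < k) := ⟨hk⟩
  simp [square, squareWalk]

theorem square_le {H : (RGraph k).Subgraph} (hk : 1 < k) (hH : H.IsCycleSub) {j : ZMod k}
    (hv : H.Adj (j, 0) (j + 1, 0)) (ha : (j, 1) ∈ H.verts) : square hk j ≤ H := by
  obtain ⟨hav, hab⟩ := hH.adj_of_neighborSet_subset ha (neighborSet_a_subset j)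
  obtain ⟨-, hbv⟩ := hH.adj_of_neighborSet_subset hab.snd_mem (neighborSet_b_subset j)
  simp [square, squareWalk, hav.symm, hab, hbv, hv.symm]

/-- `f j` says whether the ring takes the detour `v_j a_j b_j v_(j+1)` instead of the edge
`v_j v_(j+1)`. -/
def ringSucc (f : ZMod k → Bool) : ZMod k × Fin 3 → ZMod k × Fin 3
  | (j, 0) => if f j then (j, 1) else (j + 1, 0)
  | (j, 1) => (j, 2)
  | (j, 2) => (j + 1, 0)

def ringVerts (f : ZMod k → Bool) : Set (ZMod k × Fin 3) := {p | p.2 = 0 ∨ f p.1}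

def ringCycle (f : ZMod k → Bool) : (RGraph k).Subgraph :=
  Subgraph.ofSucc (ringVerts f) (ringSucc f)

theorem adj_ringSucc (hk : 1 < k) (f : ZMod k → Bool) (p : ZMod k × Fin 3) :
    (RGraph k).Adj p (ringSucc f p) := by
  obtain ⟨j, t⟩ := p
  fin_cases t
  · by_cases hf : f j <;> simp [ringSucc, hf, adj_v_a, adj_v_v hk]
  · exact adj_a_b j
  · exact adj_b_v j

theorem ringSucc_ringSucc_ne (hk : 2 < k) (f : ZMod k → Bool) (p : ZMod k × Fin 3) :
    ringSucc f (ringSucc f p) ≠ p := by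
  have h2 : (2 : ZMod k) ≠ 0 := by
    simpa using (ZMod.natCast_eq_zero_iff 2 k).not.2 (Nat.not_dvd_of_pos_of_lt two_pos hk)
  obtain ⟨j, t⟩ := p
  fin_cases t
  · by_cases hf : f j <;> simp [ringSucc, hf]
    split_ifs <;> simp [add_assoc, one_add_one_eq_two, h2]
  · simp [ringSucc]
  · simp [ringSucc]
    split_ifs <;> simp

theorem bijOn_ringSucc (f : ZMod k → Bool) :
    Set.BijOn (ringSucc f) (ringVerts f) (ringVerts f) := by
  refine ⟨?_, ?_, ?_⟩
  · rintro ⟨j, t⟩ h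
    fin_cases t <;> cases hf : f j <;> simp_all [ringSucc, ringVerts]
  · rintro ⟨i, s⟩ hi ⟨j, t⟩ hj h
    fin_cases s <;> fin_cases t <;> cases hfi : f i <;> cases hfj : f j <;>
      simp_all [ringSucc, ringVerts]
  · rintro ⟨j, t⟩ h
    fin_cases t
    · by_cases hf : f (j - 1)
      · exact ⟨(j - 1, 2), by simp [ringVerts, hf], by simp [ringSucc]⟩
      · exact ⟨(j - 1, 0), by simp [ringVerts], by simp [ringSucc, hf]⟩
    · exact ⟨(j, 0), by simp [ringVerts], by simp_all [ringSucc, ringVerts]⟩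
    · exact ⟨(j, 1), by simp_all [ringVerts], by simp [ringSucc]⟩

theorem exists_iterate_ringSucc_eq [NeZero k] (f : ZMod k → Bool) {p : ZMod k × Fin 3}
    (hp : p ∈ ringVerts f) : ∃ n, (ringSucc f)^[n] (0, 0) = p := by
  have hv (m : ℕ) : ∃ n, (ringSucc f)^[n] (0, 0) = ((m : ZMod k), 0) := by
    induction m with
    | zero => exact ⟨0, by simp⟩
    | succ m ih =>
      obtain ⟨n, hn⟩ := ih
      by_cases hf : f m
      · exact ⟨3 + n, by simp [Function.iterate_add_apply, hn, ringSucc, hf]⟩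
      · exact ⟨1 + n, by simp [Function.iterate_add_apply, hn, ringSucc, hf]⟩
  obtain ⟨j, t⟩ := p
  obtain ⟨m, rfl⟩ := ZMod.natCast_zmod_surjective j
  obtain ⟨n, hn⟩ := hv m
  fin_cases t
  · exact ⟨n, hn⟩
  · exact ⟨1 + n, by simp_all [Function.iterate_add_apply, ringSucc, ringVerts]⟩
  · exact ⟨2 + n, by simp_all [Function.iterate_add_apply, ringSucc, ringVerts]⟩

theorem isCycleSub_ringCycle (hk : 2 < k) (f : ZMod k → Bool) : (ringCycle f).IsCycleSub := by
  have : NeZero k := ⟨by omega⟩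
  exact Subgraph.isCycleSub_ofSucc (fun p _ => adj_ringSucc (by omega) f p) (bijOn_ringSucc f)
    (fun p _ => ringSucc_ringSucc_ne hk f p) (Or.inl rfl) (fun _ => exists_iterate_ringSucc_eq f)

theorem odd_ncard_verts_ringCycle (hk : Odd k) (f : ZMod k → Bool) :
    Odd (ringCycle f).verts.ncard := by
  have : NeZero k := ⟨hk.pos.ne'⟩
  have hcard : (ringCycle f).verts.ncard = ∑ j : ZMod k, if f j then 3 else 1 := by
    classical
    change (ringVerts f).ncard = _
    rw [Set.ncard_eq_toFinset_card', Finset.card_eq_sum_ones,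
      ringVerts, Set.toFinset_ofPred, Finset.sum_filter, Fintype.sum_prod_type]
    refine Finset.sum_congr rfl fun j _ => ?_
    cases hf : f j <;> simp [hf]
  rw [hcard, Finset.odd_sum_iff_odd_card_odd]
  have hodd (j : ZMod k) : Odd (if f j then 3 else 1) := by split_ifs <;> decide
  rwa [Finset.filter_true_of_mem fun j _ => hodd j, Finset.card_univ, ZMod.card]

theorem ringCycle_injective : Function.Injective (ringCycle : (ZMod k → Bool) → _) := by
  intro f g h
  funext j
  have := congrArg (fun H => (j, (1 : Fin 3)) ∈ H.verts) h
  simpa [ringCycle, Subgraph.ofSucc, ringVerts] using this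

theorem exists_le_ringCycle {H : (RGraph k).Subgraph} (hH : H.IsCycleSub)
    (h : ∀ j, H.Adj (j, 0) (j + 1, 0) → (j, 1) ∉ H.verts) : ∃ f, H ≤ ringCycle f := by
  classical
  refine ⟨fun j => decide ((j, 1) ∈ H.verts), ?_⟩
  have hverts : H.verts ⊆ ringVerts fun j => decide ((j, 1) ∈ H.verts) := by
    rintro ⟨j, t⟩ hp
    fin_cases t
    · simp [ringVerts]
    · simpa [ringVerts] using hp
    · simpa [ringVerts] using
        (hH.adj_of_neighborSet_subset hp (neighborSet_b_subset j)).1.snd_mem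
  refine ⟨hverts, fun p q hpq => ⟨H.adj_sub hpq, hverts hpq.fst_mem, hverts hpq.snd_mem, ?_⟩⟩
  have hG := H.adj_sub hpq
  have hp := hpq.fst_mem
  have hq := hpq.snd_mem
  obtain ⟨i, s⟩ := p
  obtain ⟨j, t⟩ := q
  fin_cases s <;> fin_cases t <;> simp [RGraph] at hG
  · rcases hG.2 with rfl | rfl
    · simp [ringSucc, h i hpq]
    · simp [ringSucc, h j hpq.symm]
  all_goals subst hG; simp_all [ringSucc]

theorem eq_square_or_eq_ringCycle (hk : 2 < k) {H : (RGraph k).Subgraph} (hH : H.IsCycleSub) :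
    (∃ j, square (one_lt_two.trans hk) j = H) ∨ ∃ f, ringCycle f = H := by
  by_cases h : ∃ j, H.Adj (j, 0) (j + 1, 0) ∧ (j, 1) ∈ H.verts
  · obtain ⟨j, hv, ha⟩ := h
    exact Or.inl ⟨j, (isCycleSub_square _ j).eq_of_le hH (square_le _ hH hv ha)⟩
  · push Not at h
    obtain ⟨f, hf⟩ := exists_le_ringCycle hH h
    exact Or.inr ⟨f, (hH.eq_of_le (isCycleSub_ringCycle hk f) hf).symm⟩

theorem cEven_le (hk : 2 < k) (hodd : Odd k) : cEven (RGraph k) ≤ k := by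
  have : NeZero k := ⟨by omega⟩
  have hsub : {H : (RGraph k).Subgraph | H.IsCycleSub ∧ Even H.verts.ncard} ⊆
      Set.range (square (one_lt_two.trans hk)) := by
    rintro H ⟨hH, heven⟩
    rcases eq_square_or_eq_ringCycle hk hH with h | ⟨f, rfl⟩
    · exact h
    · exact absurd heven (Nat.not_even_iff_odd.2 (odd_ncard_verts_ringCycle hodd f))
  calc cEven (RGraph k) ≤ (Set.range (square (one_lt_two.trans hk))).ncard :=
        Set.ncard_le_ncard hsub (Set.toFinite _)
    _ ≤ (Set.univ : Set (ZMod k)).ncard := by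
        rw [← Set.image_univ]; exact Set.ncard_image_le (Set.toFinite _)
    _ = k := by rw [Set.ncard_univ, Nat.card_zmod]

theorem cEven_pos (hk : 1 < k) : 0 < cEven (RGraph k) := by
  have : NeZero k := ⟨by omega⟩
  exact (Set.ncard_pos (Set.toFinite _)).2
    ⟨square hk 0, isCycleSub_square hk 0, by rw [ncard_verts_square]; decide⟩

theorem two_pow_le_cOdd (hk : 2 < k) (hodd : Odd k) : 2 ^ k ≤ cOdd (RGraph k) := by
  have : NeZero k := ⟨by omega⟩
  calc 2 ^ k = (Set.univ : Set (ZMod k → Bool)).ncard := by simp [Set.ncard_univ]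
    _ ≤ cOdd (RGraph k) :=
      Set.ncard_le_ncard_of_injOn ringCycle
        (fun f _ => ⟨isCycleSub_ringCycle hk f, odd_ncard_verts_ringCycle hodd f⟩)
        ringCycle_injective.injOn (Set.toFinite _)

end RGraph

theorem Nat.mul_two_mul_add_one_le_two_pow (n : ℕ) : n * (2 * n + 1) ≤ 2 ^ (2 * n + 1) := by
  have h := Nat.lt_two_pow_self (n := n)
  rw [pow_succ, mul_comm 2 n, pow_mul]
  nlinarith

theorem tendsto_ratio_RGraph :
    Tendsto (fun k : ℕ => (cOdd (RGraph (2 * k + 1)) : ℝ) / (cEven (RGraph (2 * k + 1)) : ℝ))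
      atTop atTop := by
  refine tendsto_atTop_mono' atTop ?_ tendsto_natCast_atTop_atTop
  filter_upwards [eventually_ge_atTop 1] with n hn
  have hk : 2 < 2 * n + 1 := by omega
  have hodd : Odd (2 * n + 1) := odd_two_mul_add_one n
  rw [le_div_iff₀ (by exact_mod_cast RGraph.cEven_pos (by omega))]
  calc (n : ℝ) * cEven (RGraph (2 * n + 1)) ≤ n * (2 * n + 1 : ℕ) := by
        gcongr; exact_mod_cast RGraph.cEven_le hk hodd
    _ ≤ (2 ^ (2 * n + 1) : ℕ) := by exact_mod_cast n.mul_two_mul_add_one_le_two_pow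
    _ ≤ cOdd (RGraph (2 * n + 1)) := by exact_mod_cast RGraph.two_pow_le_cOdd hk hodd
end

section
/- For every integer d ≥ 1, letting f_1 denote the edge v_0 v_{2d} of L_d, one has c_o(L_d, f_1) = 1 and c_e(L_d, f_1) = d − 1. -/
open SimpleGraph Filter

/-- The graph `L_d`: a path `v_0 v_1 … v_(2d)` together with the chords `v_i v_(2d-i)`
for `0 ≤ i ≤ d-1`. -/
def LGraph (d : ℕ) : SimpleGraph (Fin (2 * d + 1)) :=
  SimpleGraph.fromRel (fun p q =>
    (q.val = p.val + 1) ∨ (p.val + q.val = 2 * d ∧ p.val < d))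

/-!
A cycle `H` of `L_d` through `f_1 = v_0 v_(2d)` is forced. Every vertex of `H` has degree 2, and
`v_0`, `v_(2d)` have just one further neighbour each, so `H` runs along the path from both ends,
`v_0 v_1 …` and `v_(2d) v_(2d-1) …`, until it first uses a chord `v_k v_(2d-k)`, or up to `v_d`
if it uses none. Hence `H` contains, and being a cycle equals, the cycle `C_k` through
`v_0, …, v_k, v_(2d-k), …, v_(2d)` for some `1 ≤ k ≤ d`. `C_k` has `2k + 2` vertices for `k < d`
and `2d + 1` for `k = d`, so exactly one of them is odd and `d - 1` are even.
-/

namespace SimpleGraph.Subgraph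

variable {V : Type*} {G : SimpleGraph V}

theorem connected_coe_of_exists_adj_lt {H : G.Subgraph} {r : V} (hr : r ∈ H.verts)
    (f : V → ℕ) (h : ∀ v ∈ H.verts, v ≠ r → ∃ w, H.Adj v w ∧ f w < f v) :
    H.coe.Connected := by
  have reach : ∀ n v (hv : v ∈ H.verts), f v = n →
      H.coe.Reachable ⟨v, hv⟩ ⟨r, hr⟩ := by
    intro n
    induction n using Nat.strong_induction_on with
    | _ n ih =>
      intro v hv hn
      by_cases hvr : v = r
      · subst hvr; rfl
      obtain ⟨w, hvw, hlt⟩ := h v hv hvr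
      exact hvw.coe.reachable.trans (ih _ (hn ▸ hlt) w _ rfl)
  have : Nonempty H.verts := ⟨⟨r, hr⟩⟩
  exact ⟨fun u w => (reach _ u.1 u.2 rfl).trans (reach _ w.1 w.2 rfl).symm⟩

namespace IsCycleSub

variable {C H : G.Subgraph}

theorem adj_of_forall_adj_eq_or_eq {u v w : V} (hH : H.IsCycleSub) (hu : H.Adj v u)
    (h : ∀ x, H.Adj v x → x = u ∨ x = w) : H.Adj v w := by
  obtain ⟨x, hx, hxu⟩ :=
    Set.exists_ne_of_one_lt_ncard (by rw [hH.2.2 v (H.edge_vert hu)]; norm_num) u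
  obtain rfl := (h x hx).resolve_left hxu
  exact hx

theorem eq_of_le_s8 (hC : C.IsCycleSub) (hH : H.IsCycleSub) (hle : C ≤ H) : C = H := by
  have hnbr : ∀ v ∈ C.verts, C.neighborSet v = H.neighborSet v := fun v hv =>
    Set.eq_of_subset_of_ncard_le (neighborSet_subset_of_subgraph hle v)
      (by rw [hC.2.2 v hv, hH.2.2 v (hle.1 hv)])
      (Set.finite_of_ncard_ne_zero (by rw [hH.2.2 v (hle.1 hv)]; norm_num))
  have hverts : C.verts = H.verts := by
    refine hle.1.antisymm fun v hv => ?_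
    obtain ⟨c, hc⟩ := hC.1
    obtain ⟨p⟩ := hH.2.1.preconnected ⟨c, hle.1 hc⟩ ⟨v, hv⟩
    suffices ∀ a b : H.verts, H.coe.Walk a b → a.1 ∈ C.verts → b.1 ∈ C.verts from
      this _ _ p hc
    intro a b q
    induction q with
    | nil => exact id
    | cons hab _ ih =>
      intro ha
      have : _ ∈ H.neighborSet _ := hab
      rw [← hnbr _ ha] at this
      exact ih (C.edge_vert (Subgraph.adj_symm _ this))
  refine Subgraph.ext hverts (funext₂ fun x y => propext ⟨fun h => hle.2 h, fun h => ?_⟩)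
  have : y ∈ H.neighborSet x := h
  rwa [← hnbr x (hverts ▸ H.edge_vert h)] at this

end IsCycleSub

end SimpleGraph.Subgraph

namespace LGraph

variable {d k : ℕ}

theorem adj_iff {x y : Fin (2 * d + 1)} :
    (LGraph d).Adj x y ↔ x.val ≠ y.val ∧ (y.val = x.val + 1 ∨ x.val = y.val + 1 ∨
      x.val + y.val = 2 * d ∧ (x.val < d ∨ y.val < d)) := by
  simp only [LGraph, fromRel_adj, ne_eq, Fin.ext_iff]
  omega

/-- The cycle `v_0 … v_k v_(2d-k) … v_(2d) v_0` of `L_d`; for `k = d` it is the Hamiltonian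
cycle `v_0 v_1 … v_(2d) v_0`. -/
def cycle (d k : ℕ) : (LGraph d).Subgraph where
  verts := {v | v.val ≤ k ∨ 2 * d - k ≤ v.val}
  Adj x y := (LGraph d).Adj x y ∧ (x.val ≤ k ∨ 2 * d - k ≤ x.val) ∧
    (y.val ≤ k ∨ 2 * d - k ≤ y.val) ∧
    (x.val + y.val = 2 * d → x.val = 0 ∨ y.val = 0 ∨ x.val = k ∨ y.val = k)
  adj_sub h := h.1
  edge_vert h := h.2.1
  symm := ⟨fun _ _ h => ⟨h.1.symm, h.2.2.1, h.2.1, by omega⟩⟩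

theorem mem_cycle_verts {v : Fin (2 * d + 1)} :
    v ∈ (cycle d k).verts ↔ v.val ≤ k ∨ 2 * d - k ≤ v.val := Iff.rfl

theorem cycle_adj_iff {x y : Fin (2 * d + 1)} :
    (cycle d k).Adj x y ↔ x.val ≠ y.val ∧ (y.val = x.val + 1 ∨ x.val = y.val + 1 ∨
      x.val + y.val = 2 * d ∧ (x.val < d ∨ y.val < d)) ∧
      (x.val ≤ k ∨ 2 * d - k ≤ x.val) ∧ (y.val ≤ k ∨ 2 * d - k ≤ y.val) ∧
      (x.val + y.val = 2 * d → x.val = 0 ∨ y.val = 0 ∨ x.val = k ∨ y.val = k) := by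
  show (LGraph d).Adj x y ∧ _ ↔ _
  rw [adj_iff, and_assoc]

theorem cycle_adj_zero_last (hd : 1 ≤ d) : (cycle d k).Adj 0 (Fin.last _) := by
  rw [cycle_adj_iff]
  simp only [Fin.val_zero, Fin.val_last, true_or, implies_true, and_true]
  omega

theorem ncard_neighborSet_cycle (hk : 1 ≤ k) (hkd : k ≤ d) {v : Fin (2 * d + 1)}
    (hv : v ∈ (cycle d k).verts) : ((cycle d k).neighborSet v).ncard = 2 := by
  rw [mem_cycle_verts] at hv
  have hv' := v.isLt
  obtain ⟨a, b, ha, hb, hab, hnbr⟩ : ∃ a b : ℕ, a ≤ 2 * d ∧ b ≤ 2 * d ∧ a ≠ b ∧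
      ∀ w : Fin (2 * d + 1), (cycle d k).Adj v w ↔ w.val = a ∨ w.val = b := by
    simp only [cycle_adj_iff]
    by_cases h0 : v.val = 0
    · exact ⟨1, 2 * d, by omega, le_rfl, by omega, fun w => by have := w.isLt; omega⟩
    by_cases hl : v.val = 2 * d
    · exact ⟨2 * d - 1, 0, by omega, by omega, by omega, fun w => by have := w.isLt; omega⟩
    by_cases hc : v.val = k ∧ k < d
    · exact ⟨k - 1, 2 * d - k, by omega, by omega, by omega,
        fun w => by have := w.isLt; omega⟩
    by_cases hc' : v.val = 2 * d - k ∧ k < d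
    · exact ⟨k, 2 * d - k + 1, by omega, by omega, by omega,
        fun w => by have := w.isLt; omega⟩
    · exact ⟨v.val - 1, v.val + 1, by omega, by omega, by omega,
        fun w => by have := w.isLt; omega⟩
  rw [Set.ncard_eq_two]
  refine ⟨⟨a, by omega⟩, ⟨b, by omega⟩, by simpa [Fin.ext_iff] using hab, ?_⟩
  ext w
  simp [hnbr, Fin.ext_iff]

theorem connected_cycle (hkd : k ≤ d) : (cycle d k).coe.Connected := by
  -- the potential is the distance from `v_0` along the cycle
  refine Subgraph.connected_coe_of_exists_adj_lt (r := 0) (by simp [mem_cycle_verts])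
    (fun v => min v.val (2 * d + 1 - v.val)) fun v hv hv0 => ?_
  rw [mem_cycle_verts] at hv
  rw [Ne, Fin.ext_iff, Fin.val_zero] at hv0
  have := v.isLt
  by_cases hlow : v.val ≤ k
  · refine ⟨⟨v.val - 1, by omega⟩, ?_, by dsimp only; omega⟩
    rw [cycle_adj_iff]; dsimp only; omega
  by_cases hlast : v.val < 2 * d
  · refine ⟨⟨v.val + 1, by omega⟩, ?_, by dsimp only; omega⟩
    rw [cycle_adj_iff]; dsimp only; omega
  · refine ⟨0, ?_, by simp only [Fin.val_zero]; omega⟩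
    rw [cycle_adj_iff]
    simp only [Fin.val_zero, true_or, or_true, implies_true, and_true]
    omega

theorem isCycleSub_cycle (hk : 1 ≤ k) (hkd : k ≤ d) : (cycle d k).IsCycleSub :=
  ⟨⟨0, by simp [mem_cycle_verts]⟩, connected_cycle hkd,
    fun _ => ncard_neighborSet_cycle hk hkd⟩

theorem ncard_verts_cycle_of_lt (hkd : k < d) : (cycle d k).verts.ncard = 2 * k + 2 := by
  have himage : Fin.val '' (cycle d k).verts = Set.Icc 0 k ∪ Set.Icc (2 * d - k) (2 * d) := by
    ext n
    simp only [Set.mem_image, mem_cycle_verts, Set.mem_union, Set.mem_Icc]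
    constructor
    · rintro ⟨v, hv, rfl⟩
      have := v.isLt
      omega
    · intro hn
      exact ⟨⟨n, by omega⟩, by dsimp only; omega, rfl⟩
  have hdisj : Disjoint (Set.Icc 0 k) (Set.Icc (2 * d - k) (2 * d)) :=
    Set.disjoint_left.2 fun n h h' => by simp only [Set.mem_Icc] at h h'; omega
  rw [← Set.ncard_image_of_injective _ Fin.val_injective, himage, Set.ncard_union_eq hdisj,
    Set.ncard_Icc_nat, Set.ncard_Icc_nat]
  omega

theorem verts_cycle_self : (cycle d d).verts = Set.univ :=
  Set.eq_univ_of_forall fun v => by rw [mem_cycle_verts]; omega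

theorem even_ncard_verts_cycle_iff (hkd : k ≤ d) : Even (cycle d k).verts.ncard ↔ k < d := by
  rcases hkd.lt_or_eq with hkd | rfl
  · simp [ncard_verts_cycle_of_lt hkd, hkd, parity_simps]
  · simp [verts_cycle_self, parity_simps]

theorem cycle_injOn : Set.InjOn (cycle d) (Set.Iic d) := by
  have hne : ∀ a b, a < b → b ≤ d → cycle d a ≠ cycle d b := fun a b hab hb h => by
    have hb' : (⟨b, by omega⟩ : Fin (2 * d + 1)) ∈ (cycle d a).verts :=
      h ▸ mem_cycle_verts.2 (Or.inl le_rfl)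
    rw [mem_cycle_verts] at hb'
    dsimp only at hb'
    omega
  intro a ha b hb hab
  rcases lt_trichotomy a b with h | h | h
  · exact absurd hab (hne a b h hb)
  · exact h
  · exact absurd hab.symm (hne b a h ha)

section Uniqueness

variable {H : (LGraph d).Subgraph}

theorem adj_succ_of_isCycleSub (hH : H.IsCycleSub) (hf1 : H.Adj 0 (Fin.last _))
    (hmin : ∀ x y : Fin (2 * d + 1), 1 ≤ x.val → x.val < k → x.val + y.val = 2 * d →
      ¬H.Adj x y)
    {x y : Fin (2 * d + 1)} (hx : x.val < k) (hy : y.val = x.val + 1) : H.Adj x y := by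
  obtain ⟨n, hn⟩ : ∃ n, x.val = n := ⟨_, rfl⟩
  induction n generalizing x y with
  | zero =>
    obtain rfl : x = 0 := Fin.ext hn
    refine hH.adj_of_forall_adj_eq_or_eq hf1 fun w hw => ?_
    have := adj_iff.1 (H.adj_sub hw)
    have := w.isLt
    simp only [Fin.ext_iff, Fin.val_last] at this hy ⊢
    omega
  | succ n ih =>
    have hprev : H.Adj ⟨n, by omega⟩ x := ih (by dsimp only; omega) (by omega) rfl
    refine hH.adj_of_forall_adj_eq_or_eq hprev.symm fun w hw => ?_
    have hchord : x.val + w.val ≠ 2 * d := fun hs => hmin x w (by omega) hx hs hw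
    have := adj_iff.1 (H.adj_sub hw)
    simp only [Fin.ext_iff]
    omega

theorem adj_pred_of_isCycleSub (hH : H.IsCycleSub) (hf1 : H.Adj 0 (Fin.last _))
    (hmin : ∀ x y : Fin (2 * d + 1), 1 ≤ x.val → x.val < k → x.val + y.val = 2 * d →
      ¬H.Adj x y)
    {x y : Fin (2 * d + 1)} (hx : 2 * d - k < x.val) (hy : y.val + 1 = x.val) : H.Adj x y := by
  have := x.isLt
  obtain ⟨n, hn⟩ : ∃ n, 2 * d - x.val = n := ⟨_, rfl⟩
  induction n generalizing x y with
  | zero =>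
    obtain rfl : x = Fin.last _ := Fin.ext (by rw [Fin.val_last]; omega)
    refine hH.adj_of_forall_adj_eq_or_eq hf1.symm fun w hw => ?_
    have := adj_iff.1 (H.adj_sub hw)
    have := w.isLt
    simp only [Fin.ext_iff, Fin.val_zero, Fin.val_last] at this hy ⊢
    omega
  | succ n ih =>
    have hprev : H.Adj ⟨x.val + 1, by omega⟩ x :=
      ih (by dsimp only; omega) rfl (by omega) (by dsimp only; omega)
    refine hH.adj_of_forall_adj_eq_or_eq hprev.symm fun w hw => ?_
    have hchord : w.val + x.val ≠ 2 * d := fun hs =>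
      hmin w x (by omega) (by omega) hs hw.symm
    have := adj_iff.1 (H.adj_sub hw)
    simp only [Fin.ext_iff]
    omega

theorem cycle_le (hk : 1 ≤ k) (hkd : k ≤ d) (hH : H.IsCycleSub) (hf1 : H.Adj 0 (Fin.last _))
    (hmin : ∀ x y : Fin (2 * d + 1), 1 ≤ x.val → x.val < k → x.val + y.val = 2 * d →
      ¬H.Adj x y)
    (hchord : k = d ∨
      ∃ x y : Fin (2 * d + 1), x.val = k ∧ x.val + y.val = 2 * d ∧ H.Adj x y) :
    cycle d k ≤ H := by
  have hpath : ∀ x y : Fin (2 * d + 1), (x.val < k ∨ 2 * d - k ≤ x.val) →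
      y.val = x.val + 1 → H.Adj x y := by
    rintro x y (hx | hx) hy
    · exact adj_succ_of_isCycleSub hH hf1 hmin hx hy
    · exact (adj_pred_of_isCycleSub hH hf1 hmin (by omega) hy.symm).symm
  have hkchord : ∀ x y : Fin (2 * d + 1), x.val = k → x.val + y.val = 2 * d →
      x.val ≠ y.val → H.Adj x y := by
    intro x y hx hs hne
    obtain hkd' | ⟨x', y', hx', hs', h'⟩ := hchord
    · omega
    obtain rfl : x = x' := Fin.ext (by omega)
    obtain rfl : y = y' := Fin.ext (by omega)
    exact h'
  have hadj : ∀ ⦃x y⦄, (cycle d k).Adj x y → H.Adj x y := by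
    intro x y hxy
    rw [cycle_adj_iff] at hxy
    obtain ⟨hne, hstep | hstep | ⟨hs, -⟩, hx, hy, hend⟩ := hxy
    · exact hpath x y (by omega) hstep
    · exact (hpath y x (by omega) hstep).symm
    rcases hend hs with h | h | h | h
    · obtain rfl : y = Fin.last _ := Fin.ext (by rw [Fin.val_last]; omega)
      obtain rfl : x = 0 := Fin.ext h
      exact hf1
    · obtain rfl : x = Fin.last _ := Fin.ext (by rw [Fin.val_last]; omega)
      obtain rfl : y = 0 := Fin.ext h
      exact hf1.symm
    · exact hkchord x y h hs hne
    · exact (hkchord y x h (by omega) (Ne.symm hne)).symm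
  refine ⟨fun v hv => ?_, hadj⟩
  obtain ⟨w, hw⟩ := Set.nonempty_of_ncard_ne_zero
    (by rw [ncard_neighborSet_cycle hk hkd hv]; norm_num)
  exact H.edge_vert (hadj hw)

theorem exists_cycle_eq (hd : 1 ≤ d) (hH : H.IsCycleSub) (hf1 : H.Adj 0 (Fin.last _)) :
    ∃ k ∈ Set.Icc 1 d, cycle d k = H := by
  classical
  have hex : ∃ j, 1 ≤ j ∧
      (j = d ∨ ∃ x y : Fin (2 * d + 1), x.val = j ∧ x.val + y.val = 2 * d ∧ H.Adj x y) :=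
    ⟨d, hd, Or.inl rfl⟩
  obtain ⟨hk, hchord⟩ := Nat.find_spec hex
  have hkd : Nat.find hex ≤ d := Nat.find_min' hex ⟨hd, Or.inl rfl⟩
  refine ⟨Nat.find hex, ⟨hk, hkd⟩, (isCycleSub_cycle hk hkd).eq_of_le_s8 hH ?_⟩
  refine cycle_le hk hkd hH hf1 (fun x y h1 hlt hs hxy => ?_) hchord
  exact Nat.find_min hex hlt ⟨h1, Or.inr ⟨x, y, rfl, hs, hxy⟩⟩

end Uniqueness

theorem setOf_isCycleSub_adj_zero_last (hd : 1 ≤ d) (P : ℕ → Prop) :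
    {H : (LGraph d).Subgraph | H.IsCycleSub ∧ P H.verts.ncard ∧ H.Adj 0 (Fin.last _)} =
      cycle d '' {k ∈ Set.Icc 1 d | P (cycle d k).verts.ncard} := by
  ext H
  constructor
  · rintro ⟨hH, hP, hf1⟩
    obtain ⟨k, hk, rfl⟩ := exists_cycle_eq hd hH hf1
    exact ⟨k, ⟨hk, hP⟩, rfl⟩
  · rintro ⟨k, ⟨hk, hP⟩, rfl⟩
    exact ⟨isCycleSub_cycle hk.1 hk.2, hP, cycle_adj_zero_last hd⟩

theorem setOf_odd_ncard_verts_cycle (hd : 1 ≤ d) :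
    {k ∈ Set.Icc 1 d | Odd (cycle d k).verts.ncard} = {d} := by
  ext k
  simp only [Set.mem_ofPred_eq, Set.mem_Icc, Set.mem_singleton_iff, ← Nat.not_even_iff_odd]
  constructor
  · rintro ⟨⟨-, hkd⟩, hk⟩
    rw [even_ncard_verts_cycle_iff hkd] at hk
    omega
  · rintro rfl
    rw [even_ncard_verts_cycle_iff le_rfl]
    exact ⟨⟨hd, le_rfl⟩, lt_irrefl _⟩

theorem setOf_even_ncard_verts_cycle :
    {k ∈ Set.Icc 1 d | Even (cycle d k).verts.ncard} = Set.Icc 1 (d - 1) := by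
  ext k
  simp only [Set.mem_ofPred_eq, Set.mem_Icc]
  constructor
  · rintro ⟨⟨hk, hkd⟩, he⟩
    have := (even_ncard_verts_cycle_iff hkd).1 he
    omega
  · rintro ⟨hk, hkd⟩
    exact ⟨⟨hk, by omega⟩, (even_ncard_verts_cycle_iff (by omega)).2 (by omega)⟩

end LGraph

open LGraph in
theorem cOddE_cEvenE_LGraph_f1 (d : ℕ) (hd : 1 ≤ d) :
    cOddE (LGraph d) (0 : Fin (2 * d + 1)) (⟨2 * d, by omega⟩ : Fin (2 * d + 1)) = 1 ∧
      cEvenE (LGraph d) (0 : Fin (2 * d + 1)) (⟨2 * d, by omega⟩ : Fin (2 * d + 1)) = d - 1 := by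
  have hinj : ∀ P : ℕ → Prop, Set.InjOn (cycle d) {k ∈ Set.Icc 1 d | P k} :=
    fun _ => cycle_injOn.mono fun _ hk => hk.1.2
  have hlast : (⟨2 * d, by omega⟩ : Fin (2 * d + 1)) = Fin.last _ := rfl
  rw [cOddE, cEvenE, hlast, setOf_isCycleSub_adj_zero_last hd,
    setOf_isCycleSub_adj_zero_last hd,
    (hinj _).ncard_image, (hinj _).ncard_image, setOf_odd_ncard_verts_cycle hd,
    setOf_even_ncard_verts_cycle, Set.ncard_singleton, Set.ncard_Icc_nat]
  omega
end
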